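/- arXiv:math/0504272 — 2 statements merged into one kernel-verified Lean document; each statement's English description precedes it below -/
import Mathlib

section
/- Let d and m be positive integers with d dividing 2m. The number of elements x of the sequence (1, 3, 5, ..., 2m-1) satisfying d+1 ≤ (x mod 2d) ≤ 2d-1 has the same parity as C(d,2)·C(2m/d,2), where C denotes the binomial coefficient. -/
open Finset

lemma cnt_step (d : ℕ) (hd : 0 < d) (n : ℕ) :
    ((range (n+d)).filter (fun j => (d+1)/2 ≤ j % d)).card
      = ((range n).filter (fun j => (d+1)/2 ≤ j % d)).card + (d - (d+1)/2) := by
  have hsplit : range (n+d) = range n ∪ Ico n (n+d) := by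
    rw [range_eq_Ico, range_eq_Ico]
    exact (Finset.Ico_union_Ico_eq_Ico (Nat.zero_le n) (Nat.le_add_right n d)).symm
  have hdisj : Disjoint ((range n).filter (fun j => (d+1)/2 ≤ j % d))
      ((Ico n (n+d)).filter (fun j => (d+1)/2 ≤ j % d)) := by
    apply Finset.disjoint_filter_filter
    simp only [range_eq_Ico, Finset.Ico_disjoint_Ico_consecutive]
  have hIco : ((Ico n (n+d)).filter (fun j => (d+1)/2 ≤ j % d)).card = d - (d+1)/2 := by
    rw [show d - (d+1)/2 = (Ico ((d+1)/2) d).card by rw [Nat.card_Ico]]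
    apply card_bij (fun j _ => j % d)
    · intro j hj
      simp only [mem_filter, mem_Ico] at *
      exact ⟨hj.2, Nat.mod_lt _ hd⟩
    · intro j1 h1 j2 h2 h
      simp only [mem_filter, mem_Ico] at h1 h2
      rcases le_total j1 j2 with hle | hle
      · have hdvd : d ∣ j2 - j1 := (Nat.modEq_iff_dvd' hle).mp h
        have := Nat.eq_zero_of_dvd_of_lt hdvd (by omega)
        omega
      · have hdvd : d ∣ j1 - j2 := (Nat.modEq_iff_dvd' hle).mp h.symm
        have := Nat.eq_zero_of_dvd_of_lt hdvd (by omega)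
        omega
    · intro r hr
      simp only [mem_Ico] at hr
      have ha : n % d < d := Nat.mod_lt _ hd
      have hx : (r + d - n % d) % d < d := Nat.mod_lt _ hd
      have hn := Nat.div_add_mod n d
      have hmod : (n + (r + d - n % d) % d) % d = r := by
        rw [Nat.add_mod_mod,
          show n + (r + d - n % d) = d * (n / d) + (r + d) by omega,
          Nat.mul_add_mod, Nat.add_mod_right, Nat.mod_eq_of_lt hr.2]
      refine ⟨n + (r + d - n % d) % d, ?_, hmod⟩
      simp only [mem_filter, mem_Ico]
      exact ⟨⟨Nat.le_add_right _ _, by omega⟩, by rw [hmod]; exact hr.1⟩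
  rw [hsplit, filter_union, card_union_of_disjoint hdisj, hIco]

lemma cnt_blocks (d : ℕ) (hd : 0 < d) (q s : ℕ) :
    ((range (q*d + s)).filter (fun j => (d+1)/2 ≤ j % d)).card
      = q * (d - (d+1)/2) + ((range s).filter (fun j => (d+1)/2 ≤ j % d)).card := by
  induction q with
  | zero => simp
  | succ q ih =>
      rw [show (q+1)*d + s = (q*d + s) + d by ring, cnt_step d hd, ih]
      ring

lemma cnt_small (d : ℕ) (s : ℕ) (hs : s ≤ d) :
    ((range s).filter (fun j => (d+1)/2 ≤ j % d)).card = s - (d+1)/2 := by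
  have h : ((range s).filter (fun j => (d+1)/2 ≤ j % d)) = Ico ((d+1)/2) s := by
    ext j
    simp only [mem_filter, mem_range, mem_Ico]
    constructor
    · rintro ⟨h1, h2⟩
      rw [Nat.mod_eq_of_lt (by omega)] at h2
      omega
    · rintro ⟨h1, h2⟩
      rw [Nat.mod_eq_of_lt (by omega)]
      omega
  rw [h, Nat.card_Ico]

lemma choose_two_mod_two (n : ℕ) : Nat.choose n 2 % 2 = (n / 2) % 2 := by
  obtain ⟨a, rfl | rfl⟩ := Nat.even_or_odd' n
  · rw [Nat.choose_two_right,
      show 2*a*(2*a-1) = 2*(a*(2*a-1)) by ring,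
      Nat.mul_div_cancel_left _ (by norm_num), Nat.mul_mod]
    rcases Nat.eq_zero_or_pos a with rfl | ha
    · simp
    · rw [show (2*a-1) % 2 = 1 by omega, mul_one, Nat.mod_mod_of_dvd _ dvd_rfl]
      omega
  · rw [Nat.choose_two_right, show 2*a+1-1 = 2*a by omega,
      show (2*a+1)*(2*a) = 2*((2*a+1)*a) by ring,
      Nat.mul_div_cancel_left _ (by norm_num), Nat.mul_mod,
      show (2*a+1) % 2 = 1 by omega, one_mul, Nat.mod_mod_of_dvd _ dvd_rfl]
    omega

theorem odd_sequence_upper_half_parity (d m : ℕ) (hd : 0 < d) (hm : 0 < m)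
    (hdm : d ∣ 2 * m) :
    ((Finset.range m).filter (fun j =>
        d + 1 ≤ (2 * j + 1) % (2 * d) ∧ (2 * j + 1) % (2 * d) ≤ 2 * d - 1)).card % 2 =
      (Nat.choose d 2 * Nat.choose (2 * m / d) 2) % 2 := by
  -- rewrite the filter condition to (d+1)/2 ≤ j % d
  have hfe : (Finset.range m).filter (fun j =>
        d + 1 ≤ (2 * j + 1) % (2 * d) ∧ (2 * j + 1) % (2 * d) ≤ 2 * d - 1)
      = (range m).filter (fun j => (d+1)/2 ≤ j % d) := by
    apply filter_congr
    intro j _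
    have hr : j % d < d := Nat.mod_lt _ hd
    have h1 : (2*j+1) % (2*d) = 2*(j % d) + 1 := by
      have hn := Nat.div_add_mod j d
      rw [show 2*j+1 = 2*d*(j/d) + (2*(j % d)+1) by rw [Nat.mul_assoc]; omega,
        Nat.mul_add_mod, Nat.mod_eq_of_lt (by omega)]
    rw [h1]
    constructor
    · rintro ⟨h2, _⟩; omega
    · intro h2; omega
  rw [hfe]
  have hk : d * (2*m/d) = 2 * m := Nat.mul_div_cancel' hdm
  have hchoose : (Nat.choose d 2 * Nat.choose (2*m/d) 2) % 2 = (d/2 * ((2*m/d)/2)) % 2 := by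
    rw [Nat.mul_mod, choose_two_mod_two, choose_two_mod_two, ← Nat.mul_mod]
  rw [hchoose]
  obtain ⟨a, ha | ha⟩ := Nat.even_or_odd' (2*m/d)
  all_goals rw [ha] at hk ⊢
  · -- k = 2a even, m = a*d
    have hma : a * d = m := by
      have h2 : 2 * (a * d) = 2 * m := by rw [← hk]; ring
      omega
    rw [show m = a * d + 0 by omega, cnt_blocks d hd, cnt_small d 0 (by omega)]
    rw [show (2*a)/2 = a from by omega, show d - (d+1)/2 = d/2 by omega]
    simp [mul_comm]
  · -- k = 2a+1 odd, so d even
    obtain ⟨b, rfl | rfl⟩ := Nat.even_or_odd' d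
    · -- d = 2b
      have hmb : (2*a+1) * b = m := by
        have h2 : 2 * ((2*a+1) * b) = 2 * m := by rw [← hk]; ring
        omega
      have hb : 0 < b := by omega
      have hmb2 : m = 2*(a*b) + b := by rw [← hmb]; ring
      rw [show m = a * (2*b) + b by rw [hmb2]; ring, cnt_blocks _ hd,
        cnt_small _ b (by omega)]
      rw [show (2*a+1)/2 = a by omega, show (2*b)/2 = b by omega,
        show 2*b - (2*b+1)/2 = b by omega, show b - (2*b+1)/2 = 0 by omega]
      simp [mul_comm]
    · -- d = 2b+1 odd: contradiction
      exfalso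
      have hodd : Odd ((2*b+1) * (2*a+1)) := (odd_two_mul_add_one b).mul (odd_two_mul_add_one a)
      rw [hk] at hodd
      rcases hodd with ⟨c, hc⟩
      omega
end

section
/- Let d and m be positive integers such that d divides 2m or d divides 2m+2. Then the number of pairs (i,j) with 1 ≤ i < j ≤ 2m+1 and i ≡ j (mod d) equals (2m+2-d)m/d. -/
open Finset

lemma sum_div_range (d : ℕ) (hd : 0 < d) (r : ℕ) :
    2 * ∑ t ∈ Finset.range (d * (r + 1)), t / d = d * (r + 1) * r := by
  induction r with
  | zero =>
    have : ∀ t ∈ Finset.range (d * 1), t / d = 0 := by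
      intro t ht
      simp only [mem_range, mul_one] at ht
      exact Nat.div_eq_of_lt ht
    rw [Finset.sum_congr rfl this]
    simp
  | succ r ih =>
    have hstep : d * (r + 2) = d * (r + 1) + d := by ring
    have hsplit : Finset.range (d * (r + 2)) =
        Finset.range (d * (r + 1)) ∪ Finset.Ico (d * (r + 1)) (d * (r + 2)) := by
      rw [Finset.range_eq_Ico, Finset.range_eq_Ico]
      exact (Finset.Ico_union_Ico_eq_Ico (Nat.zero_le _) (by omega : d * (r + 1) ≤ d * (r + 2))).symm
    have hdisj : Disjoint (Finset.range (d * (r + 1))) (Finset.Ico (d * (r + 1)) (d * (r + 2))) := by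
      rw [Finset.range_eq_Ico]
      exact Finset.Ico_disjoint_Ico_consecutive 0 _ _
    rw [hsplit, Finset.sum_union hdisj]
    have hmid : ∑ t ∈ Finset.Ico (d * (r + 1)) (d * (r + 2)), t / d = d * (r + 1) := by
      have hv : ∀ t ∈ Finset.Ico (d * (r + 1)) (d * (r + 2)), t / d = r + 1 := by
        intro t ht
        simp only [Finset.mem_Ico] at ht
        exact Nat.div_eq_of_lt_le (by rw [mul_comm]; exact ht.1)
          (by rw [show (r + 1 + 1) * d = d * (r + 2) by ring]; exact ht.2)
      rw [Finset.sum_congr rfl hv, Finset.sum_const, Nat.card_Ico,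
        show d * (r + 2) - d * (r + 1) = d by omega]
      ring
    rw [hmid, Nat.mul_add, ih]
    ring

lemma inner_count (d N j : ℕ) (hd : 0 < d) (hj1 : 1 ≤ j) (hjN : j ≤ N) :
    ((Finset.Icc 1 N).filter (fun i => i < j ∧ i % d = j % d)).card = (j - 1) / d := by
  rw [← Nat.Ioc_filter_dvd_card_eq_div]
  apply Finset.card_bij' (fun i _ => j - i) (fun t _ => j - t)
  · intro i hi
    simp only [Finset.mem_filter, Finset.mem_Icc] at hi
    simp only [Finset.mem_filter, Finset.mem_Ioc]
    refine ⟨⟨by omega, by omega⟩, ?_⟩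
    exact (Nat.modEq_iff_dvd' hi.2.1.le).mp hi.2.2
  · intro t ht
    simp only [Finset.mem_filter, Finset.mem_Ioc] at ht
    simp only [Finset.mem_filter, Finset.mem_Icc]
    refine ⟨⟨by omega, by omega⟩, by omega, ?_⟩
    have h1 : j - t ≤ j := by omega
    refine (Nat.modEq_iff_dvd' h1).mpr ?_
    rw [show j - (j - t) = t by omega]
    exact ht.2
  · intro i hi
    simp only [Finset.mem_filter, Finset.mem_Icc] at hi
    omega
  · intro t ht
    simp only [Finset.mem_filter, Finset.mem_Ioc] at ht
    omega

lemma card_eq_sum (d m : ℕ) (hd : 0 < d) :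
    (((Finset.Icc 1 (2 * m + 1)) ×ˢ (Finset.Icc 1 (2 * m + 1))).filter
        (fun p => p.1 < p.2 ∧ p.1 % d = p.2 % d)).card = ∑ t ∈ Finset.range (2 * m + 1), t / d := by
  rw [Finset.card_eq_sum_card_fiberwise (f := Prod.snd) (t := Finset.Icc 1 (2 * m + 1))
    (by intro p hp; simp only [Finset.mem_coe, Finset.mem_filter, Finset.mem_product] at hp; exact hp.1.2)]
  have hfib : ∀ j ∈ Finset.Icc 1 (2 * m + 1),
      (((Finset.Icc 1 (2 * m + 1) ×ˢ Finset.Icc 1 (2 * m + 1)).filter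
        (fun p => p.1 < p.2 ∧ p.1 % d = p.2 % d)).filter (fun p => p.2 = j)).card
      = (j - 1) / d := by
    intro j hj
    simp only [Finset.mem_Icc] at hj
    rw [← inner_count d (2 * m + 1) j hd hj.1 hj.2]
    refine Finset.card_bij' (fun p _ => p.1) (fun i _ => (i, j)) ?hi ?hj ?left ?right
    case hi =>
      intro p hp
      simp only [Finset.mem_filter, Finset.mem_product, Finset.mem_Icc] at hp ⊢
      obtain ⟨⟨⟨h1, h2⟩, hlt, hmod⟩, heq⟩ := hp
      exact ⟨h1, heq ▸ hlt, heq ▸ hmod⟩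
    case hj =>
      intro i hi
      simp only [Finset.mem_filter, Finset.mem_Icc] at hi
      simp only [Finset.mem_filter, Finset.mem_product, Finset.mem_Icc]
      exact ⟨⟨⟨hi.1, hj⟩, hi.2⟩, trivial⟩
    case left =>
      intro p hp
      simp only [Finset.mem_filter] at hp
      exact Prod.ext_iff.mpr ⟨rfl, hp.2.symm⟩
    case right =>
      intro i _
      rfl
  rw [Finset.sum_congr rfl hfib]
  rw [show Finset.Icc 1 (2 * m + 1) = Finset.Ico 1 (2 * m + 2) by rw [← Finset.Ico_add_one_right_eq_Icc]; rfl]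
  rw [Finset.sum_Ico_eq_sum_range]
  simp

theorem count_congruent_pairs_odd (d m : ℕ) (hd : 0 < d) (hm : 0 < m)
    (hdm : d ∣ 2 * m ∨ d ∣ 2 * m + 2) :
    (((Finset.Icc 1 (2 * m + 1)) ×ˢ (Finset.Icc 1 (2 * m + 1))).filter
        (fun p => p.1 < p.2 ∧ p.1 % d = p.2 % d)).card = (2 * m + 2 - d) * m / d := by
  rw [card_eq_sum d m hd]
  rcases hdm with ⟨q, hq⟩ | ⟨q, hq⟩
  · -- 2*m = d*q, q ≥ 1
    have hq1 : 1 ≤ q := by by_contra h; push_neg at h; interval_cases q <;> omega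
    obtain ⟨r, rfl⟩ : ∃ r, q = r + 1 := ⟨q - 1, by omega⟩
    have hdr : d * r + d = 2 * m := by rw [hq]; ring
    have h1 : 2 * m + 1 = d * (r + 1) + 1 := by rw [hq]
    have hsum : ∑ t ∈ Finset.range (2 * m + 1), t / d
        = (∑ t ∈ Finset.range (d * (r + 1)), t / d) + (r + 1) := by
      rw [h1, Finset.sum_range_succ, Nat.mul_div_cancel_left _ hd]
    have hf := sum_div_range d hd r
    have key : (2 * m + 2 - d) * m = d * (m * r + r + 1) := by
      have h2 : 2 * m + 2 - d = d * r + 2 := by omega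
      calc (2 * m + 2 - d) * m = (d * r + 2) * m := by rw [h2]
        _ = d * (m * r) + 2 * m := by ring
        _ = d * (m * r) + (d * r + d) := by rw [hdr]
        _ = d * (m * r + r + 1) := by ring
    rw [key, Nat.mul_div_cancel_left _ hd, hsum]
    have hff : 2 * ((∑ t ∈ Finset.range (d * (r + 1)), t / d) + (r + 1))
        = 2 * (m * r + r + 1) := by
      rw [Nat.mul_add, hf, ← hq]; ring
    omega
  · -- 2*m+2 = d*q
    have hq1 : 1 ≤ q := by by_contra h; push_neg at h; interval_cases q <;> omega
    obtain ⟨r, rfl⟩ : ∃ r, q = r + 1 := ⟨q - 1, by omega⟩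
    have hdr : d * r + d = 2 * m + 2 := by rw [hq]; ring
    have hlast : (2 * m + 1) / d = r := by
      apply Nat.div_eq_of_lt_le
      · calc r * d = d * r := by ring
          _ ≤ 2 * m + 1 := by omega
      · calc 2 * m + 1 < d * r + d := by omega
          _ = (r + 1) * d := by ring
    have h1 : d * (r + 1) = (2 * m + 1) + 1 := by rw [hq]
    have hsum : ∑ t ∈ Finset.range (d * (r + 1)), t / d
        = (∑ t ∈ Finset.range (2 * m + 1), t / d) + r := by
      rw [h1, Finset.sum_range_succ, hlast]
    have hf := sum_div_range d hd r
    rw [hsum] at hf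
    have key : (2 * m + 2 - d) * m = d * (m * r) := by
      rw [show 2 * m + 2 - d = d * r by omega]; ring
    rw [key, Nat.mul_div_cancel_left _ hd]
    have hexp : d * (r + 1) * r = 2 * (m * r) + 2 * r := by
      rw [← hq]; ring
    rw [hexp] at hf
    omega
end
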